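/- arXiv:1402.4505 — 3 statements merged into one kernel-verified Lean document; each statement's English description precedes it below -/
import Mathlib

section
/- Let L be a field and P ∈ L[T] a separable polynomial (P and its derivative generate the unit ideal). Then for every n ≥ 1, the quotient map L[T]/(Pⁿ) → L[T]/(P) admits a section which is an L-algebra homomorphism. -/
/-!
In `A = L[X]/(Pⁿ)` the ideal generated by `P` is nilpotent, so `A` is Henselian along it. The
class of `X` is a root of `P` modulo that ideal, and a simple one since `P` is coprime to `P'`.
Hensel's lemma lifts it to a root `a` of `P` in `A` that is still congruent to `X` modulo `P`,
and the section is `X ↦ a`.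
-/

open Polynomial

theorem isAdicComplete_of_pow_eq_bot {R : Type*} [CommRing R] {I : Ideal R} {n : ℕ}
    (h : I ^ n = ⊥) : IsAdicComplete I R := by
  have hbot {k : ℕ} (hk : n ≤ k) : (I ^ k • ⊤ : Submodule R R) = ⊥ := by
    rw [smul_eq_mul, Ideal.mul_top, ← le_bot_iff, ← h]
    exact Ideal.pow_le_pow_right hk
  refine { haus' := fun x hx => ?_, prec' := fun f hf => ⟨f n, fun k => ?_⟩ }
  · simpa only [hbot le_rfl, SModEq.bot] using hx n
  · rcases le_total k n with hk | hk
    · exact hf hk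
    · have hfk := hf hk
      rw [hbot le_rfl, SModEq.bot] at hfk
      rw [hbot hk, SModEq.bot, hfk]

theorem Ideal.span_singleton_mk_pow_eq_bot {R : Type*} [CommRing R] (p : R) (n : ℕ) :
    Ideal.span {Ideal.Quotient.mk (Ideal.span {p ^ n}) p} ^ n = ⊥ := by
  rw [Ideal.span_singleton_pow, Ideal.span_singleton_eq_bot, ← map_pow,
    Ideal.Quotient.eq_zero_iff_mem]
  exact Ideal.mem_span_singleton_self _

theorem HenselianRing.exists_isRoot_sub_mem_of_isUnit_leadingCoeff {R : Type*} [CommRing R]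
    {I : Ideal R} [HenselianRing R I] {f : R[X]} (hf : IsUnit f.leadingCoeff) {a₀ : R}
    (h₁ : f.eval a₀ ∈ I) (h₂ : IsUnit (Ideal.Quotient.mk I (f.derivative.eval a₀))) :
    ∃ a : R, f.IsRoot a ∧ a - a₀ ∈ I := by
  obtain ⟨u, hu⟩ := hf
  have hmonic : (C (↑u⁻¹ : R) * f).Monic :=
    monic_C_mul_of_mul_leadingCoeff_eq_one (by rw [← hu, Units.inv_mul])
  obtain ⟨a, ha, ha₀⟩ := HenselianRing.is_henselian _ hmonic a₀
    (by simpa only [eval_mul, eval_C] using I.mul_mem_left _ h₁)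
    (by simpa only [derivative_mul, derivative_C, zero_mul, zero_add, eval_mul, eval_C, map_mul]
      using ((u⁻¹).isUnit.map _).mul h₂)
  refine ⟨a, ?_, ha₀⟩
  simpa [IsRoot, eval_mul, eval_C] using ha

theorem HenselianRing.exists_aeval_eq_zero_sub_mem_of_separable {R A : Type*} [CommRing R]
    [CommRing A] [Algebra R A] {I : Ideal A} [HenselianRing A I] {P : R[X]} (hP : P.Separable)
    (hlead : IsUnit P.leadingCoeff) {a₀ : A} (h₀ : aeval a₀ P ∈ I) :
    ∃ a : A, aeval a P = 0 ∧ a - a₀ ∈ I := by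
  nontriviality A
  have hderiv : IsUnit (Ideal.Quotient.mk I (aeval a₀ (derivative P))) := by
    have := IsCoprime.map hP ((Ideal.Quotient.mk I).comp (aeval a₀).toRingHom)
    rwa [RingHom.comp_apply, RingHom.comp_apply, AlgHom.toRingHom_eq_coe, RingHom.coe_coe,
      Ideal.Quotient.eq_zero_iff_mem.mpr h₀, isCoprime_zero_left] at this
  obtain ⟨a, ha, ha₀⟩ := exists_isRoot_sub_mem_of_isUnit_leadingCoeff
    (f := P.map (algebraMap R A))
    (by rw [leadingCoeff_map_eq_of_isUnit_leadingCoeff _ hlead]; exact hlead.map _)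
    (by rwa [eval_map_algebraMap]) (by rwa [derivative_map, eval_map_algebraMap])
  exact ⟨a, by rwa [← eval_map_algebraMap], ha₀⟩

theorem exists_section_of_aeval_eq_zero {R : Type*} [CommRing R] {P : R[X]} {J : Ideal R[X]}
    (hJ : J ≤ Ideal.span {P}) {a : R[X] ⧸ J} (ha : aeval a P = 0)
    (haX : Ideal.Quotient.factor hJ a = Ideal.Quotient.mk _ X) :
    ∃ s : (R[X] ⧸ Ideal.span {P}) →ₐ[R] (R[X] ⧸ J),
      (Ideal.Quotient.factor hJ).comp s.toRingHom = RingHom.id _ := by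
  have hker : ∀ q ∈ Ideal.span {P}, aeval a q = 0 := fun q hq => by
    obtain ⟨r, rfl⟩ := Ideal.mem_span_singleton'.mp hq
    rw [map_mul, ha, mul_zero]
  refine ⟨Ideal.Quotient.liftₐ _ (aeval a) hker, ?_⟩
  have hsection : (Ideal.Quotient.factorₐ R hJ).comp (Ideal.Quotient.liftₐ _ (aeval a) hker) =
      AlgHom.id R _ := by
    apply Ideal.Quotient.algHom_ext
    rw [AlgHom.comp_assoc, Ideal.Quotient.liftₐ_comp, AlgHom.id_comp]
    apply Polynomial.algHom_ext
    rw [AlgHom.comp_apply, aeval_X, Ideal.Quotient.factorₐ_apply, haX, Ideal.Quotient.mkₐ_eq_mk]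
  exact congrArg AlgHom.toRingHom hsection

theorem exists_aeval_eq_zero_factor_eq_mk_X {R : Type*} [CommRing R] {P : R[X]}
    (hP : P.Separable) (hlead : IsUnit P.leadingCoeff) {n : ℕ}
    (hn : Ideal.span {P ^ n} ≤ Ideal.span {P}) :
    ∃ a : R[X] ⧸ Ideal.span {P ^ n},
      aeval a P = 0 ∧ Ideal.Quotient.factor hn a = Ideal.Quotient.mk _ X := by
  set mk := Ideal.Quotient.mk (Ideal.span {P ^ n})
  have := isAdicComplete_of_pow_eq_bot (Ideal.span_singleton_mk_pow_eq_bot P n)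
  have hX : aeval (mk X) P = mk P := by
    rw [← Ideal.Quotient.mkₐ_eq_mk R, aeval_algHom_apply, aeval_X_left_apply]
  obtain ⟨a, ha, haX⟩ := HenselianRing.exists_aeval_eq_zero_sub_mem_of_separable
    (I := Ideal.span {mk P}) hP hlead (by rw [hX]; exact Ideal.mem_span_singleton_self _)
  refine ⟨a, ha, ?_⟩
  obtain ⟨y, hy⟩ := Ideal.mem_span_singleton'.mp haX
  rw [← sub_eq_zero, ← Ideal.Quotient.factor_mk hn X, ← map_sub, ← hy, map_mul,
    Ideal.Quotient.factor_mk, Ideal.Quotient.eq_zero_iff_mem.mpr (Ideal.mem_span_singleton_self P),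
    mul_zero]

/-- If `P` is a separable polynomial over a field `L`, then for every `n ≥ 1` the quotient
map `L[T]/(Pⁿ) → L[T]/(P)` admits a section which is an `L`-algebra homomorphism. -/
theorem quotient_pow_section_of_separable
    {L : Type*} [Field L] (P : L[X]) (hP : P.Separable) (n : ℕ) (hn : 1 ≤ n) :
    ∃ s : (L[X] ⧸ Ideal.span {P}) →ₐ[L] (L[X] ⧸ Ideal.span {P ^ n}),
      (Ideal.Quotient.factor (S := Ideal.span {P ^ n}) (T := Ideal.span {P})
        (Ideal.span_singleton_le_span_singleton.mpr ⟨P ^ (n - 1), by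
          rw [← pow_succ']
          congr 1
          omega⟩)).comp s.toRingHom = RingHom.id _ := by
  obtain ⟨a, ha, haX⟩ := exists_aeval_eq_zero_factor_eq_mk_X hP
    (isUnit_iff_ne_zero.mpr (leadingCoeff_ne_zero.mpr hP.ne_zero)) _
  exact exists_section_of_aeval_eq_zero _ ha haX
end

section
/- Let T be a triangulated category and let (f₁, f₂, f₃) be an endomorphism of a distinguished triangle A → B → C → A[1], i.e. a morphism of distinguished triangles (A → B → C → A[1]) → (A → B → C → A[1]). If f₁ and f₃ are nilpotent, then f₂ is nilpotent. -/
open CategoryTheory CategoryTheory.Pretriangulated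

/-- If `(f₁, f₂, f₃)` is an endomorphism of a distinguished triangle `A → B → C → A[1]`
in a (pre)triangulated category and `f₁`, `f₃` are nilpotent, then `f₂` is nilpotent. -/
theorem nilpotent_two_out_of_three_triangle
    {T : Type*} [Category T] [Limits.HasZeroObject T] [Preadditive T]
    [HasShift T ℤ] [∀ n : ℤ, (shiftFunctor T n).Additive] [Pretriangulated T]
    (Tr : Triangle T) (hTr : Tr ∈ distinguishedTriangles)
    (f : Tr ⟶ Tr)
    (h₁ : IsNilpotent (R := End Tr.obj₁) f.hom₁)
    (h₃ : IsNilpotent (R := End Tr.obj₃) f.hom₃) :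
    IsNilpotent (R := End Tr.obj₂) f.hom₂ := by
  obtain ⟨n, hn⟩ := h₁
  obtain ⟨m, hm⟩ := h₃
  set a : End Tr.obj₁ := f.hom₁ with ha
  set b : End Tr.obj₂ := f.hom₂ with hb
  set c : End Tr.obj₃ := f.hom₃ with hc
  have key₁ : ∀ k : ℕ, Tr.mor₁ ≫ (b ^ k : End Tr.obj₂) = (a ^ k : End Tr.obj₁) ≫ Tr.mor₁ := by
    intro k
    induction k with
    | zero =>
      show Tr.mor₁ ≫ (𝟙 _) = (𝟙 _) ≫ Tr.mor₁
      simp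
    | succ k ih =>
      rw [pow_succ, End.mul_def, pow_succ, End.mul_def]
      show Tr.mor₁ ≫ ((b : Tr.obj₂ ⟶ Tr.obj₂) ≫ _) = ((a : Tr.obj₁ ⟶ Tr.obj₁) ≫ _) ≫ Tr.mor₁
      rw [← Category.assoc, f.comm₁, Category.assoc,
        show Tr.mor₁ ≫ (b ^ k : End Tr.obj₂) = (a ^ k : End Tr.obj₁) ≫ Tr.mor₁ from ih,
        Category.assoc]
  have key₂ : ∀ k : ℕ, (b ^ k : End Tr.obj₂) ≫ Tr.mor₂ = Tr.mor₂ ≫ (c ^ k : End Tr.obj₃) := by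
    intro k
    induction k with
    | zero =>
      show (𝟙 _) ≫ Tr.mor₂ = Tr.mor₂ ≫ (𝟙 _)
      simp
    | succ k ih =>
      rw [pow_succ, End.mul_def, pow_succ, End.mul_def]
      show ((b : Tr.obj₂ ⟶ Tr.obj₂) ≫ _) ≫ Tr.mor₂ = Tr.mor₂ ≫ ((c : Tr.obj₃ ⟶ Tr.obj₃) ≫ _)
      rw [Category.assoc, ih, ← Category.assoc, ← f.comm₂, Category.assoc]
  obtain ⟨g, hg⟩ := Triangle.yoneda_exact₂ Tr hTr (b ^ n) (by
    rw [key₁, hn]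
    show (0 : Tr.obj₁ ⟶ Tr.obj₁) ≫ Tr.mor₁ = 0
    simp)
  obtain ⟨h, hh⟩ := Triangle.coyoneda_exact₂ Tr hTr (b ^ m) (by
    rw [key₂, hm]
    show Tr.mor₂ ≫ (0 : Tr.obj₃ ⟶ Tr.obj₃) = 0
    simp)
  refine ⟨n + m, ?_⟩
  have hsplit : (b ^ (n + m) : End Tr.obj₂) = (b ^ m : End Tr.obj₂) ≫ (b ^ n : End Tr.obj₂) := by
    rw [pow_add]; rfl
  show (b ^ (n + m) : End Tr.obj₂) = 0
  rw [hsplit, hh, hg, Category.assoc, ← Category.assoc Tr.mor₁,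
    comp_distTriang_mor_zero₁₂ _ hTr]
  simp
end

section
/- Let k be a field, W and V k-vector spaces, u : W → V an isomorphism and φ : W → V linear. Then the map W[T] → V[T] sending Σ wᵢTⁱ to Σ φ(wᵢ)Tⁱ − Σ u(wᵢ)Tⁱ⁺¹ is injective, and its cokernel is isomorphic to V via the inclusion of constants V → V[T] followed by the quotient. -/
open Polynomial

/-!
Write `p = Σ mᵢ Xⁱ`. The coefficient of `X^(n+1)` in `f p - X • g p` is `f m_(n+1) - g m_n`.
If it vanishes in every positive degree and `g` is injective, then the coefficients of `p` vanish
by descending induction from above its support; this gives injectivity, and shows that a constant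
lies in the image only if it is zero. Conversely `X^(n+1) • g w ≡ X^n • f w` modulo the image, so
when `g` is surjective every polynomial is congruent to a constant.
-/

theorem Finsupp.eq_zero_of_apply_succ_eq_zero_imp {M : Type*} [Zero M] (f : ℕ →₀ M)
    (h : ∀ n, f (n + 1) = 0 → f n = 0) : f = 0 := by
  obtain ⟨N, hN⟩ := f.support.exists_nat_subset_range
  have vanish : ∀ k n, N ≤ n + k → f n = 0 := by
    intro k
    induction k with
    | zero =>
      exact fun n hn ↦ notMem_support_iff.mp fun hmem ↦ by
        have := Finset.mem_range.mp (hN hmem); omega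
    | succ k ih => exact fun n hn ↦ h n (ih (n + 1) (by omega))
  ext n
  exact vanish N n (by omega)

namespace PolynomialModule

variable {R M N : Type*} [CommRing R] [AddCommGroup M] [Module R M] [AddCommGroup N] [Module R N]

theorem coeff_map (f : M →ₗ[R] N) (p : PolynomialModule R M) (n : ℕ) :
    (map R f p).coeff n = f (p.coeff n) :=
  Finsupp.mapRange_apply (hf := f.map_zero)

noncomputable def pencil (f g : M →ₗ[R] N) : PolynomialModule R M →ₗ[R] PolynomialModule R N :=
  map R f - (X : R[X]) • map R g

variable (f g : M →ₗ[R] N)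

theorem pencil_apply (p : PolynomialModule R M) :
    pencil f g p = map R f p - (X : R[X]) • map R g p :=
  rfl

theorem pencil_single (n : ℕ) (m : M) :
    pencil f g (single R n m) = single R n (f m) - single R (n + 1) (g m) := by
  simp [pencil_apply, ← monomial_one_one_eq_X, add_comm 1 n]

theorem coeff_pencil_succ (p : PolynomialModule R M) (n : ℕ) :
    (pencil f g p).coeff (n + 1) = f (p.coeff (n + 1)) - g (p.coeff n) := by
  change (map R f p).coeff (n + 1) - ((X : R[X]) • map R g p).coeff (n + 1) = _
  simp [← monomial_one_one_eq_X, coeff_map]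

variable {g}

theorem eq_zero_of_coeff_pencil_succ_eq_zero (hg : Function.Injective g)
    {p : PolynomialModule R M} (hp : ∀ n, (pencil f g p).coeff (n + 1) = 0) : p = 0 := by
  refine coeff_eq_zero.mp (p.coeff.eq_zero_of_apply_succ_eq_zero_imp fun n hn ↦ ?_)
  have hgn := hp n
  rw [coeff_pencil_succ, hn, map_zero, zero_sub, neg_eq_zero] at hgn
  exact hg (hgn.trans g.map_zero.symm)

theorem pencil_injective (hg : Function.Injective g) : Function.Injective (pencil f g) :=
  (injective_iff_map_eq_zero _).mpr fun p hp ↦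
    eq_zero_of_coeff_pencil_succ_eq_zero f hg fun n ↦ by rw [hp]; rfl

theorem single_zero_mem_range_pencil_iff (hg : Function.Injective g) (m : N) :
    single R 0 m ∈ LinearMap.range (pencil f g) ↔ m = 0 := by
  constructor
  · rintro ⟨p, hp⟩
    obtain rfl : p = 0 := eq_zero_of_coeff_pencil_succ_eq_zero f hg fun n ↦ by
      rw [hp]; exact Finsupp.single_eq_of_ne (by omega)
    simpa using congrArg (fun q ↦ q.coeff 0) hp.symm
  · rintro rfl
    rw [single_zero]
    exact Submodule.zero_mem _

theorem range_pencil_sup_range_lsingle_zero (hg : Function.Surjective g) :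
    LinearMap.range (pencil f g) ⊔ LinearMap.range (lsingle R 0) = ⊤ := by
  set S := LinearMap.range (pencil f g) ⊔ LinearMap.range (lsingle R 0)
  have single_mem : ∀ n (m : N), single R n m ∈ S := by
    intro n
    induction n with
    | zero => exact fun m ↦ Submodule.mem_sup_right ⟨m, rfl⟩
    | succ n ih =>
      intro m
      obtain ⟨w, rfl⟩ := hg m
      rw [show single R (n + 1) (g w) = single R n (f w) - pencil f g (single R n w) by
        rw [pencil_single]; abel]
      exact S.sub_mem (ih _) (Submodule.mem_sup_left ⟨_, rfl⟩)
  refine Submodule.eq_top_iff'.mpr fun q ↦ ?_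
  induction q using induction_linear with
  | zero => exact S.zero_mem
  | add p q hp hq => exact S.add_mem hp hq
  | single n m => exact single_mem n m

theorem mkQ_comp_lsingle_zero_injective (hg : Function.Injective g) :
    Function.Injective ((LinearMap.range (pencil f g)).mkQ ∘ₗ lsingle R 0) :=
  (injective_iff_map_eq_zero _).mpr fun m hm ↦
    (single_zero_mem_range_pencil_iff f hg m).mp ((Submodule.Quotient.mk_eq_zero _).mp hm)

theorem mkQ_comp_lsingle_zero_surjective (hg : Function.Surjective g) :
    Function.Surjective ((LinearMap.range (pencil f g)).mkQ ∘ₗ lsingle R 0) := by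
  rw [← LinearMap.range_eq_top, LinearMap.range_comp, Submodule.map_mkQ_eq_top]
  exact range_pencil_sup_range_lsingle_zero f hg

end PolynomialModule

/-- Let `u : W → V` be an isomorphism of `k`-vector spaces and `φ : W → V` linear. Then
the map `W[T] → V[T]`, `Σ wᵢTⁱ ↦ Σ φ(wᵢ)Tⁱ − Σ u(wᵢ)Tⁱ⁺¹`, is injective and its cokernel
is isomorphic to `V` via the inclusion of constants followed by the quotient map. -/
theorem injective_and_coker_of_phi_sub_uT
    {k : Type*} [Field k] {W V : Type*}
    [AddCommGroup W] [Module k W] [AddCommGroup V] [Module k V]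
    (u : W →ₗ[k] V) (hu : Function.Bijective u) (φ : W →ₗ[k] V)
    (Ψ : PolynomialModule k W →ₗ[k] PolynomialModule k V)
    (hΨ : ∀ p, Ψ p = PolynomialModule.map k φ p - (X : k[X]) • PolynomialModule.map k u p) :
    Function.Injective Ψ ∧
      Function.Bijective ((LinearMap.range Ψ).mkQ.comp (PolynomialModule.lsingle k 0)) := by
  obtain rfl : Ψ = PolynomialModule.pencil φ u := LinearMap.ext hΨ
  exact ⟨PolynomialModule.pencil_injective φ hu.injective,
    PolynomialModule.mkQ_comp_lsingle_zero_injective φ hu.injective,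
    PolynomialModule.mkQ_comp_lsingle_zero_surjective φ hu.surjective⟩
end
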